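/- Assume moreover C_γ > C_α > 0 and 0 < C_R ≤ C_γ − C_α, and set 𝔊 := (1/2)^{C_δ/(C_γ−C_α)}·(1 − (2/3)^{(C_β+C_δ)/(C_γ−C_α)}) + (2/3)^{(C_β+C_δ)/(C_γ−C_α)}. Then 𝔊 < 1 and K²𝟏(x₀) ≤ 𝔊·(C_β/(C_β+C_δ))². -/

import Mathlib

open MeasureTheory

/-- Birth rate in the allometric setting with `β = α−1`: `b(x) = C_β x^{α−1}` for
`x > x₀` and `0` otherwise. -/
noncomputable def birthRate (x₀ Cβ α : ℝ) (x : ℝ) : ℝ :=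
  if x₀ < x then Cβ * x ^ (α - 1) else 0

/-- Death rate `d(x) = C_δ x^{α−1}`. -/
noncomputable def deathRate (Cδ α : ℝ) (x : ℝ) : ℝ := Cδ * x ^ (α - 1)

/-- Net energy gain `g(x) = C_R x^α`. -/
noncomputable def energyGain (CR α : ℝ) (x : ℝ) : ℝ := CR * x ^ α

/-- The operator `K`:
`K f(ξ) = ∫_ξ^∞ (b(x)/g(x)) exp(−∫_ξ^x (b+d)/g) f(x−x₀) dx`. -/
noncomputable def Kop (x₀ Cβ Cδ CR α : ℝ) (f : ℝ → ℝ) (ξ : ℝ) : ℝ :=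
  ∫ x in Set.Ioi ξ,
    birthRate x₀ Cβ α x / energyGain CR α x *
      Real.exp
        (-(∫ τ in ξ..x,
            (birthRate x₀ Cβ α τ + deathRate Cδ α τ) / energyGain CR α τ)) *
      f (x - x₀)

/-!
Below the threshold `x₀` nothing is born, so `K f(y) = (y/x₀)^σ K f(x₀)` for `y ≤ x₀`, with
`σ = C_δ/C_R`. Above it `(b + d)/g = (C_β + C_δ)/(C_R x)`, so `K f(y)` is `q = C_β/(C_β + C_δ)`
times the mean of `f(X − x₀)` for a Pareto variable `X` of scale `y` and index
`θ = (C_β + C_δ)/C_R`. Hence `K𝟏 ≤ q` everywhere and `K𝟏 ≤ q (1/2)^σ` on `(0, x₀/2]`. Integrating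
this step bound against the Pareto law of scale `x₀`, which gives mass `1 − (2/3)^θ` to
`(x₀, 3x₀/2]`, bounds `K²𝟏(x₀)` by the claimed expression with `C_R` in place of `C_γ − C_α`;
that expression increases with `C_R`.
-/

open Real Set ProbabilityTheory

section Pareto

variable {m θ a c : ℝ}

lemma paretoPDFReal_eqOn_Ioi (hc : m ≤ c) :
    EqOn (paretoPDFReal m θ) (fun x => θ * m ^ θ * x ^ (-(θ + 1))) (Ioi c) :=
  fun _ hx => if_pos (hc.trans (le_of_lt hx))

lemma integrableOn_paretoPDFReal_Ioi (hm : 0 < m) (hθ : 0 < θ) (hc : m ≤ c) :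
    IntegrableOn (paretoPDFReal m θ) (Ioi c) :=
  IntegrableOn.congr_fun
    ((integrableOn_Ioi_rpow_of_lt (by linarith : -(θ + 1) < -1) (hm.trans_le hc)).const_mul _)
    (paretoPDFReal_eqOn_Ioi hc).symm measurableSet_Ioi

lemma integral_paretoPDFReal_Ioi (hm : 0 < m) (hθ : 0 < θ) (hc : m ≤ c) :
    ∫ x in Ioi c, paretoPDFReal m θ x = (m / c) ^ θ := by
  have hc0 := hm.trans_le hc
  rw [setIntegral_congr_fun measurableSet_Ioi (paretoPDFReal_eqOn_Ioi hc), integral_const_mul,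
    integral_Ioi_rpow_of_lt (by linarith) hc0, show -(θ + 1) + 1 = -θ by ring,
    rpow_neg hc0.le, div_rpow hm.le hc0.le]
  field_simp

lemma integral_paretoPDFReal_Ioc (hm : 0 < m) (hθ : 0 < θ) (ha : m ≤ a) :
    ∫ x in Ioc m a, paretoPDFReal m θ x = 1 - (m / a) ^ θ := by
  have hunion := setIntegral_union (Ioc_disjoint_Ioi le_rfl) measurableSet_Ioi
    ((integrableOn_paretoPDFReal_Ioi hm hθ le_rfl).mono_set Ioc_subset_Ioi_self)
    (integrableOn_paretoPDFReal_Ioi hm hθ ha)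
  rw [Ioc_union_Ioi_eq_Ioi ha, integral_paretoPDFReal_Ioi hm hθ le_rfl,
    integral_paretoPDFReal_Ioi hm hθ ha, div_self hm.ne', one_rpow] at hunion
  linarith

lemma integral_paretoPDFReal_mul_ite (hm : 0 < m) (hθ : 0 < θ) (ha : m ≤ a) (c₁ c₂ : ℝ) :
    IntegrableOn (fun x => paretoPDFReal m θ x * if x ≤ a then c₁ else c₂) (Ioi m) ∧
    ∫ x in Ioi m, paretoPDFReal m θ x * (if x ≤ a then c₁ else c₂)
      = c₁ * (1 - (m / a) ^ θ) + c₂ * (m / a) ^ θ := by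
  have hlow : EqOn (fun x => paretoPDFReal m θ x * if x ≤ a then c₁ else c₂)
      (fun x => c₁ * paretoPDFReal m θ x) (Ioc m a) := fun x hx => by
    simp only [if_pos hx.2, mul_comm]
  have hhigh : EqOn (fun x => paretoPDFReal m θ x * if x ≤ a then c₁ else c₂)
      (fun x => c₂ * paretoPDFReal m θ x) (Ioi a) := fun x hx => by
    simp only [if_neg (not_le.2 (mem_Ioi.1 hx)), mul_comm]
  have hint_low := IntegrableOn.congr_fun (((integrableOn_paretoPDFReal_Ioi hm hθ le_rfl).mono_set
    Ioc_subset_Ioi_self).const_mul c₁) hlow.symm measurableSet_Ioc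
  have hint_high := IntegrableOn.congr_fun ((integrableOn_paretoPDFReal_Ioi hm hθ ha).const_mul c₂)
    hhigh.symm measurableSet_Ioi
  rw [← Ioc_union_Ioi_eq_Ioi ha]
  refine ⟨hint_low.union hint_high, ?_⟩
  rw [setIntegral_union (Ioc_disjoint_Ioi le_rfl) measurableSet_Ioi hint_low hint_high,
    setIntegral_congr_fun measurableSet_Ioc hlow, setIntegral_congr_fun measurableSet_Ioi hhigh,
    integral_const_mul, integral_const_mul, integral_paretoPDFReal_Ioc hm hθ ha,
    integral_paretoPDFReal_Ioi hm hθ ha]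

end Pareto

lemma intervalIntegral_eq_mul_log_of_eqOn {f : ℝ → ℝ} {κ y x : ℝ} (hy : 0 < y) (hyx : y ≤ x)
    (hf : EqOn f (fun τ => κ * τ⁻¹) (Ioc y x)) :
    IntervalIntegrable f volume y x ∧ ∫ τ in y..x, f τ = κ * log (x / y) := by
  have hinv : IntervalIntegrable (fun τ : ℝ => κ * τ⁻¹) volume y x :=
    (intervalIntegral.intervalIntegrable_inv
      (fun t ht => ((hy.trans_le (uIcc_of_le hyx ▸ ht).1).ne')) continuousOn_id).const_mul κ
  refine ⟨(intervalIntegrable_iff_integrableOn_Ioc_of_le hyx).2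
    ((hinv.1).congr_fun hf.symm measurableSet_Ioc), ?_⟩
  rw [intervalIntegral.integral_of_le hyx, setIntegral_congr_fun measurableSet_Ioc hf,
    ← intervalIntegral.integral_of_le hyx, intervalIntegral.integral_const_mul,
    integral_inv_of_pos hy (hy.trans_le hyx)]

lemma exp_neg_mul_log_div {κ y x : ℝ} (hy : 0 < y) (hx : 0 < x) :
    exp (-(κ * log (x / y))) = (y / x) ^ κ := by
  rw [rpow_def_of_pos (div_pos hy hx), ← inv_div, log_inv]
  ring_nf

lemma mul_rpow_sub_one_div_mul_rpow (c κ : ℝ) {x α : ℝ} (hx : 0 < x) :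
    c * x ^ (α - 1) / (κ * x ^ α) = c / κ * x⁻¹ := by
  have := (rpow_pos_of_pos hx α).ne'
  rw [rpow_sub_one hx.ne']
  field_simp

section Hazard

noncomputable def jumpHazard (x₀ Cβ Cδ CR α τ : ℝ) : ℝ :=
  (birthRate x₀ Cβ α τ + deathRate Cδ α τ) / energyGain CR α τ

variable {x₀ Cβ Cδ CR α : ℝ}

lemma Kop_apply (f : ℝ → ℝ) (ξ : ℝ) :
    Kop x₀ Cβ Cδ CR α f ξ = ∫ x in Ioi ξ, birthRate x₀ Cβ α x / energyGain CR α x *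
      exp (-∫ τ in ξ..x, jumpHazard x₀ Cβ Cδ CR α τ) * f (x - x₀) := rfl

lemma birthRate_div_energyGain_of_lt {x : ℝ} (hx₀ : 0 ≤ x₀) (hx : x₀ < x) :
    birthRate x₀ Cβ α x / energyGain CR α x = Cβ / CR * x⁻¹ := by
  rw [birthRate, energyGain, if_pos hx, mul_rpow_sub_one_div_mul_rpow _ _ (hx₀.trans_lt hx)]

lemma jumpHazard_of_le {τ : ℝ} (hτ : 0 < τ) (hτx : τ ≤ x₀) :
    jumpHazard x₀ Cβ Cδ CR α τ = Cδ / CR * τ⁻¹ := by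
  rw [jumpHazard, birthRate, deathRate, energyGain, if_neg hτx.not_gt, zero_add,
    mul_rpow_sub_one_div_mul_rpow _ _ hτ]

lemma jumpHazard_of_lt {τ : ℝ} (hτ : 0 < τ) (hτx : x₀ < τ) :
    jumpHazard x₀ Cβ Cδ CR α τ = (Cβ + Cδ) / CR * τ⁻¹ := by
  rw [jumpHazard, birthRate, deathRate, energyGain, if_pos hτx, ← add_mul,
    mul_rpow_sub_one_div_mul_rpow _ _ hτ]

lemma integral_jumpHazard_of_threshold_le {y x : ℝ} (hx₀ : 0 < x₀) (hy : x₀ ≤ y)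
    (hyx : y ≤ x) :
    IntervalIntegrable (jumpHazard x₀ Cβ Cδ CR α) volume y x ∧
      ∫ τ in y..x, jumpHazard x₀ Cβ Cδ CR α τ = (Cβ + Cδ) / CR * log (x / y) :=
  intervalIntegral_eq_mul_log_of_eqOn (hx₀.trans_le hy) hyx fun _ hτ =>
    jumpHazard_of_lt (hx₀.trans_le (hy.trans hτ.1.le)) (hy.trans_lt hτ.1)

lemma integral_jumpHazard_of_le_threshold {y : ℝ} (hy : 0 < y) (hyx₀ : y ≤ x₀) :
    IntervalIntegrable (jumpHazard x₀ Cβ Cδ CR α) volume y x₀ ∧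
      ∫ τ in y..x₀, jumpHazard x₀ Cβ Cδ CR α τ = Cδ / CR * log (x₀ / y) :=
  intervalIntegral_eq_mul_log_of_eqOn hy hyx₀ fun _ hτ => jumpHazard_of_le (hy.trans hτ.1) hτ.2

lemma Kop_of_threshold_le {y : ℝ} (hx₀ : 0 < x₀) (hβδ : Cβ + Cδ ≠ 0) (hy : x₀ ≤ y)
    (f : ℝ → ℝ) :
    Kop x₀ Cβ Cδ CR α f y =
      Cβ / (Cβ + Cδ) * ∫ x in Ioi y, paretoPDFReal y ((Cβ + Cδ) / CR) x * f (x - x₀) := by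
  rw [Kop_apply, ← integral_const_mul]
  refine setIntegral_congr_fun measurableSet_Ioi fun x hx => ?_
  have hy0 := hx₀.trans_le hy
  have hx0 := hy0.trans hx
  rw [birthRate_div_energyGain_of_lt hx₀.le (hy.trans_lt hx),
    (integral_jumpHazard_of_threshold_le hx₀ hy (le_of_lt hx)).2, exp_neg_mul_log_div hy0 hx0,
    paretoPDFReal, if_pos (le_of_lt hx), div_rpow hy0.le hx0.le, rpow_neg hx0.le,
    rpow_add_one hx0.ne']
  field_simp

lemma Kop_of_le_threshold {y : ℝ} (hy : 0 < y) (hyx₀ : y ≤ x₀) (f : ℝ → ℝ) :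
    Kop x₀ Cβ Cδ CR α f y = (y / x₀) ^ (Cδ / CR) * Kop x₀ Cβ Cδ CR α f x₀ := by
  have hx₀ := hy.trans_le hyx₀
  rw [Kop_apply, Kop_apply, ← integral_const_mul,
    setIntegral_eq_of_subset_of_forall_sdiff_eq_zero measurableSet_Ioi (Ioi_subset_Ioi hyx₀)
      fun x hx => by rw [birthRate, if_neg (show ¬x₀ < x from hx.2), zero_div, zero_mul, zero_mul]]
  refine setIntegral_congr_fun measurableSet_Ioi fun x hx => ?_
  obtain ⟨hint_low, hlow⟩ := integral_jumpHazard_of_le_threshold (Cβ := Cβ) (α := α) hy hyx₀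
  obtain ⟨hint_high, -⟩ := integral_jumpHazard_of_threshold_le (Cβ := Cβ) (Cδ := Cδ) (CR := CR)
    (α := α) hx₀ le_rfl (le_of_lt hx)
  rw [← intervalIntegral.integral_add_adjacent_intervals hint_low hint_high, neg_add, exp_add,
    hlow, exp_neg_mul_log_div hy hx₀]
  ring

end Hazard

section KopOne

variable {x₀ Cβ Cδ CR α : ℝ}

lemma Kop_one_of_threshold_le {y : ℝ} (hx₀ : 0 < x₀) (hβδ : 0 < Cβ + Cδ) (hCR : 0 < CR)
    (hy : x₀ ≤ y) :
    Kop x₀ Cβ Cδ CR α (fun _ => 1) y = Cβ / (Cβ + Cδ) := by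
  have hy0 := hx₀.trans_le hy
  simp only [Kop_of_threshold_le hx₀ hβδ.ne' hy, mul_one]
  rw [integral_paretoPDFReal_Ioi hy0 (div_pos hβδ hCR) le_rfl, div_self hy0.ne', one_rpow, mul_one]

lemma Kop_one_of_le_threshold {y : ℝ} (hβδ : 0 < Cβ + Cδ) (hCR : 0 < CR) (hy : 0 < y)
    (hyx₀ : y ≤ x₀) :
    Kop x₀ Cβ Cδ CR α (fun _ => 1) y = Cβ / (Cβ + Cδ) * (y / x₀) ^ (Cδ / CR) := by
  rw [Kop_of_le_threshold hy hyx₀, Kop_one_of_threshold_le (hy.trans_le hyx₀) hβδ hCR le_rfl,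
    mul_comm]

lemma Kop_one_mem_Icc {y : ℝ} (hx₀ : 0 < x₀) (hCβ : 0 < Cβ) (hCδ : 0 < Cδ) (hCR : 0 < CR)
    (hy : 0 < y) :
    Kop x₀ Cβ Cδ CR α (fun _ => 1) y ∈ Icc 0 (Cβ / (Cβ + Cδ)) := by
  have hβδ : 0 < Cβ + Cδ := add_pos hCβ hCδ
  rcases le_or_gt y x₀ with hyx₀ | hx₀y
  · rw [Kop_one_of_le_threshold hβδ hCR hy hyx₀]
    refine ⟨by positivity, mul_le_of_le_one_right (by positivity) ?_⟩
    exact rpow_le_one (by positivity) ((div_le_one hx₀).2 hyx₀) (by positivity)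
  · rw [Kop_one_of_threshold_le hx₀ hβδ hCR hx₀y.le]
    exact ⟨by positivity, le_rfl⟩

lemma iterate_two_Kop_one_le (hx₀ : 0 < x₀) (hCβ : 0 < Cβ) (hCδ : 0 < Cδ) (hCR : 0 < CR) :
    (Kop x₀ Cβ Cδ CR α)^[2] (fun _ => 1) x₀ ≤
      ((1 / 2 : ℝ) ^ (Cδ / CR) * (1 - (2 / 3 : ℝ) ^ ((Cβ + Cδ) / CR)) +
        (2 / 3 : ℝ) ^ ((Cβ + Cδ) / CR)) * (Cβ / (Cβ + Cδ)) ^ 2 := by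
  set q := Cβ / (Cβ + Cδ)
  set θ := (Cβ + Cδ) / CR
  set σ := Cδ / CR
  have hβδ : 0 < Cβ + Cδ := add_pos hCβ hCδ
  have hθ : 0 < θ := div_pos hβδ hCR
  obtain ⟨hint, hval⟩ := integral_paretoPDFReal_mul_ite hx₀ hθ (a := 3 / 2 * x₀) (by linarith)
    (q * (1 / 2) ^ σ) q
  have hstep : ∀ x ∈ Ioi x₀, paretoPDFReal x₀ θ x * Kop x₀ Cβ Cδ CR α (fun _ => 1) (x - x₀) ≤
      paretoPDFReal x₀ θ x * if x ≤ 3 / 2 * x₀ then q * (1 / 2) ^ σ else q := by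
    intro x hx
    have hz : 0 < x - x₀ := sub_pos.2 hx
    refine mul_le_mul_of_nonneg_left ?_ (paretoPDFReal_nonneg hx₀.le hθ.le x)
    split_ifs with hxa
    · rw [Kop_one_of_le_threshold hβδ hCR hz (by linarith)]
      refine mul_le_mul_of_nonneg_left (rpow_le_rpow (by positivity) ?_ (div_pos hCδ hCR).le) (by positivity)
      rw [div_le_iff₀ hx₀]
      linarith
    · exact (Kop_one_mem_Icc hx₀ hCβ hCδ hCR hz).2
  calc (Kop x₀ Cβ Cδ CR α)^[2] (fun _ => 1) x₀
      = q * ∫ x in Ioi x₀, paretoPDFReal x₀ θ x * Kop x₀ Cβ Cδ CR α (fun _ => 1) (x - x₀) :=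
        Kop_of_threshold_le hx₀ hβδ.ne' le_rfl _
    _ ≤ q * ∫ x in Ioi x₀, paretoPDFReal x₀ θ x * if x ≤ 3 / 2 * x₀ then q * (1 / 2) ^ σ else q := by
        refine mul_le_mul_of_nonneg_left (integral_mono_of_nonneg ?_ hint
          (ae_restrict_of_forall_mem measurableSet_Ioi hstep)) (by positivity)
        refine ae_restrict_of_forall_mem measurableSet_Ioi fun x hx => ?_
        exact mul_nonneg (paretoPDFReal_nonneg hx₀.le hθ.le x)
          (Kop_one_mem_Icc hx₀ hCβ hCδ hCR (sub_pos.2 hx)).1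
    _ = _ := by
        rw [hval, show x₀ / (3 / 2 * x₀) = 2 / 3 by field_simp]
        ring

end KopOne

lemma mul_one_sub_add_lt_one {u v : ℝ} (hu : u < 1) (hv : v < 1) : u * (1 - v) + v < 1 := by
  nlinarith [mul_pos (sub_pos.2 hu) (sub_pos.2 hv)]

lemma mul_one_sub_add_le_mul_one_sub_add {u u' v v' : ℝ} (hu : u ≤ u') (hu1 : u ≤ 1)
    (hv : v ≤ v') (hv1 : v' ≤ 1) : u * (1 - v) + v ≤ u' * (1 - v') + v' := by
  nlinarith [mul_nonneg (sub_nonneg.2 hu) (sub_nonneg.2 hv1),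
    mul_nonneg (sub_nonneg.2 hv) (sub_nonneg.2 hu1)]

theorem stmt13_general (α x₀ Cβ Cδ CR Cγ Cα : ℝ)
    (hx₀ : 0 < x₀)
    (hCβ : 0 < Cβ) (hCδ : 0 < Cδ) (hCR : 0 < CR)
    (hCγ : Cα < Cγ) (hCRle : CR ≤ Cγ - Cα) :
    ((1 / 2 : ℝ) ^ (Cδ / (Cγ - Cα)) * (1 - (2 / 3 : ℝ) ^ ((Cβ + Cδ) / (Cγ - Cα))) +
          (2 / 3 : ℝ) ^ ((Cβ + Cδ) / (Cγ - Cα)) < 1) ∧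
      (Kop x₀ Cβ Cδ CR α)^[2] (fun _ => 1) x₀ ≤
        ((1 / 2 : ℝ) ^ (Cδ / (Cγ - Cα)) * (1 - (2 / 3 : ℝ) ^ ((Cβ + Cδ) / (Cγ - Cα))) +
            (2 / 3 : ℝ) ^ ((Cβ + Cδ) / (Cγ - Cα))) *
          (Cβ / (Cβ + Cδ)) ^ 2 := by
  have hγα : 0 < Cγ - Cα := sub_pos.2 hCγ
  have hβδ : 0 < Cβ + Cδ := add_pos hCβ hCδ
  have h12 : (1 / 2 : ℝ) ^ (Cδ / (Cγ - Cα)) < 1 :=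
    rpow_lt_one (by norm_num) (by norm_num) (div_pos hCδ hγα)
  have h23 : (2 / 3 : ℝ) ^ ((Cβ + Cδ) / (Cγ - Cα)) < 1 :=
    rpow_lt_one (by norm_num) (by norm_num) (div_pos hβδ hγα)
  refine ⟨mul_one_sub_add_lt_one h12 h23,
    (iterate_two_Kop_one_le hx₀ hCβ hCδ hCR).trans (mul_le_mul_of_nonneg_right ?_ (sq_nonneg _))⟩
  refine mul_one_sub_add_le_mul_one_sub_add ?_ ?_ ?_ h23.le
  · exact rpow_le_rpow_of_exponent_ge (by norm_num) (by norm_num)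
      (div_le_div_of_nonneg_left hCδ.le hCR hCRle)
  · exact rpow_le_one (by norm_num) (by norm_num) (div_pos hCδ hCR).le
  · exact rpow_le_rpow_of_exponent_ge (by norm_num) (by norm_num)
      (div_le_div_of_nonneg_left hβδ.le hCR hCRle)

/-- Lemma 6.18, second part: with `C_γ > C_α > 0` and `0 < C_R ≤ C_γ − C_α`, setting
`𝔊 := (1/2)^{C_δ/(C_γ−C_α)}(1 − (2/3)^{(C_β+C_δ)/(C_γ−C_α)}) + (2/3)^{(C_β+C_δ)/(C_γ−C_α)}`,
one has `𝔊 < 1` and `K²𝟏(x₀) ≤ 𝔊 (C_β/(C_β+C_δ))²`. -/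
theorem stmt13 (α x₀ Cβ Cδ CR Cγ Cα : ℝ)
    (hα0 : 0 < α) (hα1 : α ≤ 1) (hx₀ : 0 < x₀)
    (hCβ : 0 < Cβ) (hCδ : 0 < Cδ) (hCR : 0 < CR)
    (hCα : 0 < Cα) (hCγ : Cα < Cγ) (hCRle : CR ≤ Cγ - Cα) :
    ((1 / 2 : ℝ) ^ (Cδ / (Cγ - Cα)) * (1 - (2 / 3 : ℝ) ^ ((Cβ + Cδ) / (Cγ - Cα))) +
          (2 / 3 : ℝ) ^ ((Cβ + Cδ) / (Cγ - Cα)) < 1) ∧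
      (Kop x₀ Cβ Cδ CR α)^[2] (fun _ => 1) x₀ ≤
        ((1 / 2 : ℝ) ^ (Cδ / (Cγ - Cα)) * (1 - (2 / 3 : ℝ) ^ ((Cβ + Cδ) / (Cγ - Cα))) +
            (2 / 3 : ℝ) ^ ((Cβ + Cδ) / (Cγ - Cα))) *
          (Cβ / (Cβ + Cδ)) ^ 2 :=
  stmt13_general α x₀ Cβ Cδ CR Cγ Cα hx₀ hCβ hCδ hCR hCγ hCRle
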